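/- (Decay rate of integrated MSE for a finite-dimensional field class.) In the binary-sensing model with inf_{x∈D} p_X(x) = ν > 0, suppose f lies in the span of a fixed orthonormal family {φ_0, …, φ_{k−1}} in L²(D), i.e., f = Σ_{j=0}^{k−1} ⟨f, φ_j⟩ φ_j. Then the estimate with truncation point m = k satisfies, for every zero-mean noise distribution supported in [−b, b], E[‖f − f̂_{n,k}‖²] ≤ c² k / (n ν); in particular the integrated MSE is O(1/n). -/

import Mathlib

/-!
Each coefficient estimate is a sample mean, `α̂_j = c · (1/n) ∑ᵢ Wᵢ` with
`Wᵢ = conj (φ_j Xᵢ) / p_X Xᵢ · Bᵢ`. Averaging `Bᵢ` over the uniform threshold and then over the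
zero-mean noise gives `f Xᵢ / c` (this needs `|f + Z| ≤ c`), and integrating against the density
`p_X` of `Xᵢ` gives `E Wᵢ = α_j / c`. Moreover `E |Wᵢ|² = ∫_D |φ_j|² / p_X ≤ 1 / ν`, so by
independence `E |α_j - α̂_j|² ≤ c² / (n ν)`. Since `f` lies in the span of the orthonormal
`φ_0, …, φ_{k-1}`, Parseval gives `‖f - f̂_{n,k}‖² = ∑_{j<k} |α_j - α̂_j|²`, and summing over
`j < k` yields `c² k / (n ν)`.
-/

open MeasureTheory ProbabilityTheory Filter
open scoped ENNReal Topology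

noncomputable section

/-- Sign function: `+1` if `u > 0` and `-1` otherwise. -/
def sgn' (u : ℝ) : ℝ := if 0 < u then 1 else -1

/-- Binary-quantized observation of sensor `i`: `B i = sgn (f (X i) + Z i - T i)`. -/
def obsB {E Ω : Type*} (f : E → ℝ) (X : ℕ → Ω → E) (Z T : ℕ → Ω → ℝ)
    (i : ℕ) (ω : Ω) : ℝ :=
  sgn' (f (X i ω) + Z i ω - T i ω)

/-- Estimate of the `j`-th coefficient from the first `n` sensors:
`α̂_j = (c/n) ∑_{i<n} (φ_j(X_i))^* / p_X(X_i) * B_i`. -/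
def alphaHat {E Ω : Type*} (c : ℝ) (pX : E → ℝ) (φ : ℕ → E → ℂ) (f : E → ℝ)
    (X : ℕ → Ω → E) (Z T : ℕ → Ω → ℝ) (n j : ℕ) (ω : Ω) : ℂ :=
  ((c : ℂ) / (n : ℂ)) * ∑ i ∈ Finset.range n,
    (starRingEnd ℂ) (φ j (X i ω)) / (pX (X i ω) : ℂ) * (obsB f X Z T i ω : ℂ)

/-- The `j`-th coefficient of the field `f`: `α_j = ⟨f, φ_j⟩ = ∫_D f (φ_j)^*`. -/
def coeff {E : Type*} [MeasureSpace E] (D : Set E) (f : E → ℝ) (φ : ℕ → E → ℂ)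
    (j : ℕ) : ℂ :=
  ∫ x in D, (f x : ℂ) * (starRingEnd ℂ) (φ j x)

/-- The `m`-term field estimate `f̂_{n,m} = ∑_{j<m} α̂_j φ_j`. -/
def fieldEst {E Ω : Type*} (c : ℝ) (pX : E → ℝ) (φ : ℕ → E → ℂ) (f : E → ℝ)
    (X : ℕ → Ω → E) (Z T : ℕ → Ω → ℝ) (n m : ℕ) (x : E) (ω : Ω) : ℂ :=
  ∑ j ∈ Finset.range m, alphaHat c pX φ f X Z T n j ω * φ j x

/-- The `m`-term approximation `f_m = ∑_{j<m} α_j φ_j`. -/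
def mApprox {E : Type*} [MeasureSpace E] (D : Set E) (f : E → ℝ) (φ : ℕ → E → ℂ)
    (m : ℕ) (x : E) : ℂ :=
  ∑ j ∈ Finset.range m, coeff D f φ j * φ j x

/-- The integrated mean squared error `E[‖f - f̂_{n,m}‖²]`. -/
def intMSE {E Ω : Type*} [MeasureSpace E] [MeasurableSpace Ω] (P : Measure Ω)
    (D : Set E) (c : ℝ) (pX : E → ℝ) (φ : ℕ → E → ℂ) (f : E → ℝ)
    (X : ℕ → Ω → E) (Z T : ℕ → Ω → ℝ) (n m : ℕ) : ℝ :=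
  ∫ ω, (∫ x in D, ‖(f x : ℂ) - fieldEst c pX φ f X Z T n m x ω‖ ^ 2) ∂P

/-- The `m`-term approximation error `ε[f,m] = ∑_{j≥m} |α_j|²`. -/
def tailErr {E : Type*} [MeasureSpace E] (D : Set E) (f : E → ℝ) (φ : ℕ → E → ℂ)
    (m : ℕ) : ℝ :=
  ∑' j : ℕ, ‖coeff D f φ (m + j)‖ ^ 2

/-- The deployment distribution: density `p_X` (w.r.t. Lebesgue measure) on `D`. -/
def deployLaw {E : Type*} [MeasureSpace E] (D : Set E) (pX : E → ℝ) : Measure E :=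
  (volume.restrict D).withDensity fun x => ENNReal.ofReal (pX x)

/-- The threshold distribution: uniform on `[-c, c]`. -/
def threshLaw (c : ℝ) : Measure ℝ :=
  (ENNReal.ofReal (1 / (2 * c))) • volume.restrict (Set.Icc (-c) c)

end

open Set ComplexConjugate

lemma abs_sgn' (u : ℝ) : |sgn' u| = 1 := by
  unfold sgn'; split <;> simp

@[fun_prop]
lemma measurable_sgn' : Measurable sgn' :=
  Measurable.ite measurableSet_Ioi measurable_const measurable_const

lemma isProbabilityMeasure_threshLaw {c : ℝ} (hc : 0 < c) :
    IsProbabilityMeasure (threshLaw c) := by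
  constructor
  rw [threshLaw, Measure.smul_apply, Measure.restrict_apply_univ, Real.volume_Icc, smul_eq_mul,
    ← ENNReal.ofReal_mul (by positivity)]
  field_simp
  norm_num

lemma integral_sgn'_sub_threshLaw {c u : ℝ} (hu : u ∈ Icc (-c) c) :
    ∫ t, sgn' (u - t) ∂threshLaw c = u / c := by
  have hsgn : (fun t => sgn' (u - t)) = fun t => (Iio u).indicator (fun _ => (2 : ℝ)) t - 1 := by
    ext t
    by_cases h : t < u
    · simp [sgn', h]
      norm_num
    · simp [sgn', h]
  have hIio : Iio u ∩ Icc (-c) c = Ico (-c) u := by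
    ext t
    simp only [mem_inter_iff, mem_Iio, mem_Icc, mem_Ico]
    constructor
    · rintro ⟨htu, hct, -⟩; exact ⟨hct, htu⟩
    · rintro ⟨hct, htu⟩; exact ⟨htu, hct, htu.le.trans hu.2⟩
  have hc : 0 ≤ c := by linarith [hu.1, hu.2]
  rw [threshLaw, integral_smul_measure, hsgn, integral_sub
    ((integrable_const _).indicator measurableSet_Iio) (integrable_const _),
    integral_indicator measurableSet_Iio, Measure.restrict_restrict measurableSet_Iio, hIio,
    setIntegral_const, integral_const, measureReal_def, Measure.real, Measure.restrict_apply_univ,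
    Real.volume_Ico, Real.volume_Icc, ENNReal.toReal_ofReal (by positivity),
    ENNReal.toReal_ofReal (by linarith [hu.1]), ENNReal.toReal_ofReal (by linarith)]
  rcases hc.eq_or_lt with rfl | hc
  · simp
  · simp only [smul_eq_mul]
    field_simp
    ring

lemma integral_sgn'_add_sub_prod_threshLaw {c u : ℝ} (hc : 0 < c) {μZ : Measure ℝ}
    [IsProbabilityMeasure μZ] (hmean : ∫ z, z ∂μZ = 0) (hrange : ∀ᵐ z ∂μZ, u + z ∈ Icc (-c) c) :
    ∫ q, sgn' (u + q.1 - q.2) ∂μZ.prod (threshLaw c) = u / c := by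
  have := isProbabilityMeasure_threshLaw hc
  have hint : Integrable (fun q : ℝ × ℝ => sgn' (u + q.1 - q.2)) (μZ.prod (threshLaw c)) := by
    refine Integrable.of_bound (by fun_prop : Measurable _).aestronglyMeasurable 1
      (ae_of_all _ fun q => ?_)
    rw [Real.norm_eq_abs, abs_sgn']
  have hZint : Integrable (fun z : ℝ => z) μZ := by
    refine Integrable.of_bound aestronglyMeasurable_id (|u| + c) ?_
    filter_upwards [hrange] with z hz
    rw [Real.norm_eq_abs, abs_le]
    constructor <;> linarith [hz.1, hz.2, neg_abs_le u, le_abs_self u]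
  calc ∫ q, sgn' (u + q.1 - q.2) ∂μZ.prod (threshLaw c)
      = ∫ z, (u + z) / c ∂μZ := by
        rw [integral_prod _ hint]
        refine integral_congr_ae ?_
        filter_upwards [hrange] with z hz
        exact integral_sgn'_sub_threshLaw hz
    _ = u / c := by
        rw [integral_div, integral_add (integrable_const u) hZint, hmean, integral_const]
        simp

section Deployment

variable {E : Type*} [MeasureSpace E] {D : Set E} {pX : E → ℝ}

instance [SFinite (volume : Measure E)] : SFinite (deployLaw D pX) := by
  unfold deployLaw
  infer_instance

lemma ae_deployLaw_mem (hD : MeasurableSet D) : ∀ᵐ x ∂deployLaw D pX, x ∈ D :=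
  (withDensity_absolutelyContinuous _ _).ae_le (ae_restrict_mem hD)

lemma integral_deployLaw {G : Type*} [NormedAddCommGroup G] [NormedSpace ℝ G]
    (hD : MeasurableSet D) (hpX : Measurable pX) (hpos : ∀ x ∈ D, 0 ≤ pX x) (g : E → G) :
    ∫ x, g x ∂deployLaw D pX = ∫ x in D, pX x • g x := by
  rw [deployLaw, integral_withDensity_eq_integral_toReal_smul hpX.ennreal_ofReal
    (ae_of_all _ fun _ => ENNReal.ofReal_lt_top)]
  refine setIntegral_congr_fun hD fun x hx => ?_
  rw [ENNReal.toReal_ofReal (hpos x hx)]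

lemma integrable_deployLaw_iff {G : Type*} [NormedAddCommGroup G] [NormedSpace ℝ G]
    (hD : MeasurableSet D) (hpX : Measurable pX) (hpos : ∀ x ∈ D, 0 ≤ pX x) {g : E → G} :
    Integrable g (deployLaw D pX) ↔ Integrable (fun x => pX x • g x) (volume.restrict D) := by
  rw [deployLaw, integrable_withDensity_iff_integrable_smul' hpX.ennreal_ofReal
    (ae_of_all _ fun _ => ENNReal.ofReal_lt_top)]
  refine integrable_congr ?_
  filter_upwards [ae_restrict_mem hD] with x hx
  rw [ENNReal.toReal_ofReal (hpos x hx)]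

end Deployment

section Score

variable {E : Type*} {pX : E → ℝ} {ψ : E → ℂ} {f : E → ℝ}

/-- The contribution `conj (ψ x) / p_X x * sgn (f x + z - t)` of one sensor reading `(x, z, t)`;
`alphaHat` is `c / n` times the sum of these over the sensors. -/
noncomputable def score (pX : E → ℝ) (ψ : E → ℂ) (f : E → ℝ) (p : E × ℝ × ℝ) : ℂ :=
  conj (ψ p.1) / (pX p.1 : ℂ) * (sgn' (f p.1 + p.2.1 - p.2.2) : ℂ)

lemma measurable_score [MeasurableSpace E] (hpX : Measurable pX) (hψ : Measurable ψ)
    (hf : Measurable f) : Measurable (score pX ψ f) := by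
  unfold score
  fun_prop

lemma norm_score (p : E × ℝ × ℝ) : ‖score pX ψ f p‖ = ‖ψ p.1‖ / |pX p.1| := by
  simp [score, abs_sgn']

end Score

section ScoreMoments

variable {E : Type*} [MeasureSpace E] [SFinite (volume : Measure E)] {D : Set E} {pX : E → ℝ}
  {ψ : E → ℂ} {φ : ℕ → E → ℂ} {f : E → ℝ} {c ν : ℝ}

lemma integral_sq_norm_score_le (μ₂ : Measure (ℝ × ℝ)) [IsProbabilityMeasure μ₂]
    (hD : MeasurableSet D) (hpX : Measurable pX) (hν : 0 < ν) (hνpX : ∀ x ∈ D, ν ≤ pX x)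
    (hψ : Measurable ψ) (hψL2 : MemLp ψ 2 (volume.restrict D)) :
    Integrable (fun p => ‖score pX ψ f p‖ ^ 2) ((deployLaw D pX).prod μ₂) ∧
      ∫ p, ‖score pX ψ f p‖ ^ 2 ∂(deployLaw D pX).prod μ₂ ≤ (∫ x in D, ‖ψ x‖ ^ 2) / ν := by
  have hpos : ∀ x ∈ D, 0 ≤ pX x := fun x hx => hν.le.trans (hνpX x hx)
  have hsq : ∀ p : E × ℝ × ℝ, ‖score pX ψ f p‖ ^ 2 = ‖ψ p.1‖ ^ 2 / pX p.1 ^ 2 := fun p => by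
    rw [norm_score, div_pow, sq_abs]
  have hweight : ∀ x ∈ D, pX x • (‖ψ x‖ ^ 2 / pX x ^ 2) ≤ ‖ψ x‖ ^ 2 / ν := fun x hx => by
    have hp : 0 < pX x := hν.trans_le (hνpX x hx)
    rw [smul_eq_mul, show pX x * (‖ψ x‖ ^ 2 / pX x ^ 2) = ‖ψ x‖ ^ 2 / pX x by field_simp]
    exact div_le_div_of_nonneg_left (by positivity) hν (hνpX x hx)
  have hψsq : Integrable (fun x => ‖ψ x‖ ^ 2 / ν) (volume.restrict D) :=
    (hψL2.integrable_norm_pow two_ne_zero).div_const ν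
  have hint : Integrable (fun x => pX x • (‖ψ x‖ ^ 2 / pX x ^ 2)) (volume.restrict D) := by
    refine hψsq.mono' (by fun_prop : Measurable _).aestronglyMeasurable ?_
    filter_upwards [ae_restrict_mem hD] with x hx
    rw [Real.norm_of_nonneg (by have := hpos x hx; positivity)]
    exact hweight x hx
  simp only [hsq]
  refine ⟨(((integrable_deployLaw_iff hD hpX hpos).2 hint)).comp_fst μ₂, ?_⟩
  rw [integral_fun_fst (fun x => ‖ψ x‖ ^ 2 / pX x ^ 2), probReal_univ, one_smul,
    integral_deployLaw hD hpX hpos, ← integral_div]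
  exact setIntegral_mono_on hint hψsq hD hweight

lemma memLp_score (μ₂ : Measure (ℝ × ℝ)) [IsProbabilityMeasure μ₂]
    (hD : MeasurableSet D) (hpX : Measurable pX) (hν : 0 < ν) (hνpX : ∀ x ∈ D, ν ≤ pX x)
    (hψ : Measurable ψ) (hψL2 : MemLp ψ 2 (volume.restrict D)) (hf : Measurable f) :
    MemLp (score pX ψ f) 2 ((deployLaw D pX).prod μ₂) :=
  (memLp_two_iff_integrable_sq_norm (measurable_score hpX hψ hf).aestronglyMeasurable).2
    (integral_sq_norm_score_le μ₂ hD hpX hν hνpX hψ hψL2).1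

lemma integral_score {μZ : Measure ℝ} [IsProbabilityMeasure μZ] (hc : 0 < c)
    (hD : MeasurableSet D) (hpX : Measurable pX) (hpos : ∀ x ∈ D, 0 < pX x)
    (hmean : ∫ z, z ∂μZ = 0) (hrange : ∀ x ∈ D, ∀ᵐ z ∂μZ, f x + z ∈ Set.Icc (-c) c) (j : ℕ)
    (hint : Integrable (score pX (φ j) f) ((deployLaw D pX).prod (μZ.prod (threshLaw c)))) :
    ∫ p, score pX (φ j) f p ∂(deployLaw D pX).prod (μZ.prod (threshLaw c)) =
      coeff D f φ j / c := by
  have := isProbabilityMeasure_threshLaw hc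
  have hinner : ∀ᵐ x ∂deployLaw D pX, ∫ q, score pX (φ j) f (x, q) ∂μZ.prod (threshLaw c) =
      conj (φ j x) / (pX x : ℂ) * (f x / c : ℝ) := by
    filter_upwards [ae_deployLaw_mem hD] with x hx
    simp only [score]
    rw [integral_const_mul, integral_complex_ofReal,
      integral_sgn'_add_sub_prod_threshLaw hc hmean (hrange x hx)]
  rw [integral_prod _ hint, integral_congr_ae hinner,
    integral_deployLaw hD hpX fun x hx => (hpos x hx).le, coeff, ← integral_div]
  refine setIntegral_congr_fun hD fun x hx => ?_
  have hp : (pX x : ℂ) ≠ 0 := Complex.ofReal_ne_zero.2 (hpos x hx).ne'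
  simp only [Complex.real_smul]
  push_cast
  field_simp

end ScoreMoments

section SampleMean

variable {Ω : Type*} [MeasurableSpace Ω] {P : Measure Ω}

lemma integral_norm_sub_integral_sq [IsFiniteMeasure P] {V : Ω → ℂ} (hV : MemLp V 2 P) :
    ∫ ω, ‖V ω - P[V]‖ ^ 2 ∂P = Var[fun ω => (V ω).re; P] + Var[fun ω => (V ω).im; P] := by
  have hVre : MemLp (fun ω => (V ω).re) 2 P := hV.re
  have hVim : MemLp (fun ω => (V ω).im) 2 P := hV.im
  have hre : P[fun ω => (V ω).re] = (P[V]).re := integral_re (hV.integrable one_le_two)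
  have him : P[fun ω => (V ω).im] = (P[V]).im := integral_im (hV.integrable one_le_two)
  have hre2 : Integrable (fun ω => ((V ω).re - (P[V]).re) ^ 2) P :=
    (hVre.sub (memLp_const _)).integrable_sq
  have him2 : Integrable (fun ω => ((V ω).im - (P[V]).im) ^ 2) P :=
    (hVim.sub (memLp_const _)).integrable_sq
  rw [variance_eq_integral hVre.aemeasurable, variance_eq_integral hVim.aemeasurable, hre, him,
    ← integral_add hre2 him2]
  refine integral_congr_ae (ae_of_all _ fun ω => ?_)
  simp only [Complex.sq_norm, Complex.normSq_apply, Complex.sub_re, Complex.sub_im]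
  ring

lemma variance_re_add_variance_im_le [IsProbabilityMeasure P] {V : Ω → ℂ} (hV : MemLp V 2 P) :
    Var[fun ω => (V ω).re; P] + Var[fun ω => (V ω).im; P] ≤ ∫ ω, ‖V ω‖ ^ 2 ∂P := by
  have hVre : MemLp (fun ω => (V ω).re) 2 P := hV.re
  have hVim : MemLp (fun ω => (V ω).im) 2 P := hV.im
  calc Var[fun ω => (V ω).re; P] + Var[fun ω => (V ω).im; P]
      ≤ ∫ ω, (V ω).re ^ 2 ∂P + ∫ ω, (V ω).im ^ 2 ∂P :=
        add_le_add (variance_le_expectation_sq hVre.1) (variance_le_expectation_sq hVim.1)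
    _ = ∫ ω, ‖V ω‖ ^ 2 ∂P := by
        rw [← integral_add hVre.integrable_sq hVim.integrable_sq]
        refine integral_congr_ae (ae_of_all _ fun ω => ?_)
        simp only [Complex.sq_norm, Complex.normSq_apply]
        ring

lemma integral_norm_sum_sub_sq_le [IsProbabilityMeasure P] {ι : Type*} {W : ι → Ω → ℂ}
    {s : Finset ι} (hW : ∀ i ∈ s, MemLp (W i) 2 P)
    (hind : Set.Pairwise s fun i j => W i ⟂ᵢ[P] W j) :
    ∫ ω, ‖∑ i ∈ s, W i ω - ∑ i ∈ s, P[W i]‖ ^ 2 ∂P ≤ ∑ i ∈ s, ∫ ω, ‖W i ω‖ ^ 2 ∂P := by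
  have hS : MemLp (fun ω => ∑ i ∈ s, W i ω) 2 P := memLp_finsetSum s hW
  have hre : Var[fun ω => (∑ i ∈ s, W i ω).re; P] = ∑ i ∈ s, Var[fun ω => (W i ω).re; P] := by
    rw [← IndepFun.variance_sum (X := fun i ω => (W i ω).re) (fun i hi => (hW i hi).re)
      fun i hi j hj hij => (hind hi hj hij).comp Complex.measurable_re Complex.measurable_re]
    congr 1
    ext ω
    simp [Complex.re_sum]
  have him : Var[fun ω => (∑ i ∈ s, W i ω).im; P] = ∑ i ∈ s, Var[fun ω => (W i ω).im; P] := by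
    rw [← IndepFun.variance_sum (X := fun i ω => (W i ω).im) (fun i hi => (hW i hi).im)
      fun i hi j hj hij => (hind hi hj hij).comp Complex.measurable_im Complex.measurable_im]
    congr 1
    ext ω
    simp [Complex.im_sum]
  rw [← integral_finsetSum s fun i hi => (hW i hi).integrable one_le_two,
    integral_norm_sub_integral_sq hS, hre, him, ← Finset.sum_add_distrib]
  exact Finset.sum_le_sum fun i hi => variance_re_add_variance_im_le (hW i hi)

lemma integral_norm_sub_sampleMean_sq_le [IsProbabilityMeasure P] {W : ℕ → Ω → ℂ} {n : ℕ}
    (hn : 0 < n) {m : ℂ} {κ : ℝ} (hW : ∀ i ∈ Finset.range n, MemLp (W i) 2 P)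
    (hmean : ∀ i ∈ Finset.range n, P[W i] = m)
    (hmom : ∀ i ∈ Finset.range n, ∫ ω, ‖W i ω‖ ^ 2 ∂P ≤ κ)
    (hind : Set.Pairwise (Finset.range n : Set ℕ) fun i j => W i ⟂ᵢ[P] W j) :
    ∫ ω, ‖m - (n : ℂ)⁻¹ * ∑ i ∈ Finset.range n, W i ω‖ ^ 2 ∂P ≤ κ / n := by
  have hn' : (n : ℂ) ≠ 0 := Nat.cast_ne_zero.2 hn.ne'
  have hpt : ∀ ω, ‖m - (n : ℂ)⁻¹ * ∑ i ∈ Finset.range n, W i ω‖ ^ 2 =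
      ((n : ℝ) ^ 2)⁻¹ * ‖∑ i ∈ Finset.range n, W i ω - ∑ i ∈ Finset.range n, P[W i]‖ ^ 2 := by
    intro ω
    rw [Finset.sum_congr rfl hmean, Finset.sum_const, Finset.card_range, nsmul_eq_mul,
      show m - (n : ℂ)⁻¹ * ∑ i ∈ Finset.range n, W i ω =
        -((n : ℂ)⁻¹ * (∑ i ∈ Finset.range n, W i ω - n * m)) by field_simp; ring,
      norm_neg, norm_mul, mul_pow, norm_inv, Complex.norm_natCast, inv_pow]
  calc ∫ ω, ‖m - (n : ℂ)⁻¹ * ∑ i ∈ Finset.range n, W i ω‖ ^ 2 ∂P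
      = ((n : ℝ) ^ 2)⁻¹ *
          ∫ ω, ‖∑ i ∈ Finset.range n, W i ω - ∑ i ∈ Finset.range n, P[W i]‖ ^ 2 ∂P := by
        simp only [hpt, integral_const_mul]
    _ ≤ ((n : ℝ) ^ 2)⁻¹ * ∑ _i ∈ Finset.range n, κ := by
        gcongr
        exact (integral_norm_sum_sub_sq_le hW hind).trans (Finset.sum_le_sum hmom)
    _ = κ / n := by
        rw [Finset.sum_const, Finset.card_range, nsmul_eq_mul]
        field_simp

end SampleMean

section Parseval

lemma integral_norm_sum_sq_of_orthonormal {α ι : Type*} [MeasurableSpace α] [DecidableEq ι]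
    {μ : Measure α} {φ : ι → α → ℂ} {s : Finset ι} (hφ : ∀ j ∈ s, MemLp (φ j) 2 μ)
    (hON : ∀ j ∈ s, ∀ l ∈ s, ∫ x, φ j x * conj (φ l x) ∂μ = if j = l then 1 else 0)
    (d : ι → ℂ) :
    ∫ x, ‖∑ j ∈ s, d j * φ j x‖ ^ 2 ∂μ = ∑ j ∈ s, ‖d j‖ ^ 2 := by
  have hint : ∀ j ∈ s, ∀ l ∈ s, Integrable (fun x => φ j x * conj (φ l x)) μ :=
    fun j hj l hl => (hφ j hj).integrable_mul (hφ l hl).star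
  have hsq : ∀ z : ℂ, ((‖z‖ ^ 2 : ℝ) : ℂ) = z * conj z := fun z => by
    rw [Complex.mul_conj, Complex.normSq_eq_norm_sq]
  apply Complex.ofReal_injective
  calc ((∫ x, ‖∑ j ∈ s, d j * φ j x‖ ^ 2 ∂μ : ℝ) : ℂ)
      = ∫ x, ∑ j ∈ s, ∑ l ∈ s, d j * conj (d l) * (φ j x * conj (φ l x)) ∂μ := by
        rw [← integral_complex_ofReal]
        refine integral_congr_ae (ae_of_all _ fun x => ?_)
        simp only [hsq, map_sum, map_mul, Finset.sum_mul_sum]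
        exact Finset.sum_congr rfl fun j _ => Finset.sum_congr rfl fun l _ => by ring
    _ = ∑ j ∈ s, ∑ l ∈ s, d j * conj (d l) * ∫ x, φ j x * conj (φ l x) ∂μ := by
        rw [integral_finsetSum _ fun j hj => integrable_finsetSum _ fun l hl =>
          (hint j hj l hl).const_mul _]
        refine Finset.sum_congr rfl fun j hj => ?_
        rw [integral_finsetSum _ fun l hl => (hint j hj l hl).const_mul _]
        exact Finset.sum_congr rfl fun l _ => integral_const_mul _ _
    _ = ((∑ j ∈ s, ‖d j‖ ^ 2 : ℝ) : ℂ) := by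
        push_cast
        refine Finset.sum_congr rfl fun j hj => ?_
        simp [Finset.sum_congr rfl fun l hl => congrArg _ (hON j hj l hl), hj, ← hsq]

end Parseval

section Estimator

variable {E : Type*} [MeasureSpace E] {D : Set E} {pX : E → ℝ} {φ : ℕ → E → ℂ} {f : E → ℝ}
  {c ν : ℝ} {Ω : Type*} [MeasurableSpace Ω] {P : Measure Ω} [IsProbabilityMeasure P]
  {X : ℕ → Ω → E} {Z T : ℕ → Ω → ℝ}

lemma memLp_alphaHat_and_integral_norm_coeff_sub_alphaHat_sq_le [SFinite (volume : Measure E)]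
    {μZ : Measure ℝ} [IsProbabilityMeasure μZ] (hc : 0 < c) (hD : MeasurableSet D)
    (hf : Measurable f) (hpX : Measurable pX) (hν : 0 < ν) (hνpX : ∀ x ∈ D, ν ≤ pX x)
    (hmean : ∫ z, z ∂μZ = 0) (hrange : ∀ x ∈ D, ∀ᵐ z ∂μZ, f x + z ∈ Set.Icc (-c) c)
    (hlaw : ∀ i, HasLaw (fun ω => (X i ω, Z i ω, T i ω))
      ((deployLaw D pX).prod (μZ.prod (threshLaw c))) P)
    (hind : iIndepFun (fun i ω => (X i ω, Z i ω, T i ω)) P)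
    {j : ℕ} (hφ : Measurable (φ j)) (hφL2 : MemLp (φ j) 2 (volume.restrict D))
    {n : ℕ} (hn : 0 < n) :
    MemLp (alphaHat c pX φ f X Z T n j) 2 P ∧
      ∫ ω, ‖coeff D f φ j - alphaHat c pX φ f X Z T n j ω‖ ^ 2 ∂P ≤
        c ^ 2 * (∫ x in D, ‖φ j x‖ ^ 2) / (n * ν) := by
  have := isProbabilityMeasure_threshLaw hc
  have : IsProbabilityMeasure ((deployLaw D pX).prod (μZ.prod (threshLaw c))) :=
    (hlaw 0).map_eq ▸ Measure.isProbabilityMeasure_map (hlaw 0).aemeasurable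
  have hg := measurable_score (f := f) hpX hφ hf
  have hgL2 := memLp_score (μZ.prod (threshLaw c)) hD hpX hν hνpX hφ hφL2 hf
  set W : ℕ → Ω → ℂ := fun i ω => score pX (φ j) f (X i ω, Z i ω, T i ω)
  have hW : ∀ i ∈ Finset.range n, MemLp (W i) 2 P := fun i _ =>
    (memLp_map_measure_iff (g := score pX (φ j) f) ((hlaw i).map_eq ▸ hg.aestronglyMeasurable)
      (hlaw i).aemeasurable).1 ((hlaw i).map_eq ▸ hgL2)
  have hWmean : ∀ i ∈ Finset.range n, P[W i] = coeff D f φ j / c := fun i _ => by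
    rw [← integral_score hc hD hpX (fun x hx => hν.trans_le (hνpX x hx)) hmean hrange j
      (hgL2.integrable one_le_two)]
    exact (hlaw i).integral_comp hg.aestronglyMeasurable
  have hWmom : ∀ i ∈ Finset.range n, ∫ ω, ‖W i ω‖ ^ 2 ∂P ≤ (∫ x in D, ‖φ j x‖ ^ 2) / ν :=
    fun i _ => ((hlaw i).integral_comp (f := fun p => ‖score pX (φ j) f p‖ ^ 2)
      (by fun_prop)).trans_le (integral_sq_norm_score_le _ hD hpX hν hνpX hφ hφL2).2
  have hWind : Set.Pairwise (Finset.range n : Set ℕ) fun i i' => W i ⟂ᵢ[P] W i' :=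
    fun i _ i' _ hii' => (hind.comp (fun _ => score pX (φ j) f) fun _ => hg).indepFun hii'
  have hα : alphaHat c pX φ f X Z T n j =
      fun ω => c * ((n : ℂ)⁻¹ * ∑ i ∈ Finset.range n, W i ω) := by
    ext ω
    rw [alphaHat, div_eq_mul_inv, mul_assoc]
    rfl
  refine ⟨hα ▸ ((memLp_finsetSum _ hW).const_mul _).const_mul _, ?_⟩
  have hc' : (c : ℂ) ≠ 0 := Complex.ofReal_ne_zero.2 hc.ne'
  calc ∫ ω, ‖coeff D f φ j - alphaHat c pX φ f X Z T n j ω‖ ^ 2 ∂P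
      = c ^ 2 * ∫ ω, ‖coeff D f φ j / c - (n : ℂ)⁻¹ * ∑ i ∈ Finset.range n, W i ω‖ ^ 2 ∂P := by
        rw [← integral_const_mul, hα]
        refine integral_congr_ae (ae_of_all _ fun ω => ?_)
        dsimp only
        rw [show coeff D f φ j - c * ((n : ℂ)⁻¹ * ∑ i ∈ Finset.range n, W i ω) =
            c * (coeff D f φ j / c - (n : ℂ)⁻¹ * ∑ i ∈ Finset.range n, W i ω) by field_simp,
          norm_mul, mul_pow, Complex.norm_real, Real.norm_eq_abs, sq_abs]
    _ ≤ c ^ 2 * ((∫ x in D, ‖φ j x‖ ^ 2) / ν / n) := by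
        gcongr
        exact integral_norm_sub_sampleMean_sq_le hn hW hWmean hWmom hWind
    _ = c ^ 2 * (∫ x in D, ‖φ j x‖ ^ 2) / (n * ν) := by
        field_simp

lemma intMSE_eq_sum_integral_norm_coeff_sub_alphaHat_sq {k n : ℕ}
    (hφL2 : ∀ j, MemLp (φ j) 2 (volume.restrict D))
    (hON : ∀ j < k, ∀ l < k, ∫ x in D, φ j x * conj (φ l x) = if j = l then 1 else 0)
    (hspan : ∀ᵐ x ∂volume.restrict D, (f x : ℂ) = ∑ j ∈ Finset.range k, coeff D f φ j * φ j x)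
    (hα : ∀ j < k, MemLp (alphaHat c pX φ f X Z T n j) 2 P) :
    intMSE P D c pX φ f X Z T n k =
      ∑ j ∈ Finset.range k, ∫ ω, ‖coeff D f φ j - alphaHat c pX φ f X Z T n j ω‖ ^ 2 ∂P := by
  have hpt : ∀ ω, ∫ x in D, ‖(f x : ℂ) - fieldEst c pX φ f X Z T n k x ω‖ ^ 2 =
      ∑ j ∈ Finset.range k, ‖coeff D f φ j - alphaHat c pX φ f X Z T n j ω‖ ^ 2 := fun ω => by
    rw [← integral_norm_sum_sq_of_orthonormal (fun j _ => hφL2 j)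
      (by simpa only [Finset.mem_range] using hON)]
    refine integral_congr_ae ?_
    filter_upwards [hspan] with x hx
    simp only [hx, fieldEst, ← Finset.sum_sub_distrib, sub_mul]
  have hint : ∀ j ∈ Finset.range k,
      Integrable (fun ω => ‖coeff D f φ j - alphaHat c pX φ f X Z T n j ω‖ ^ 2) P :=
    fun j hj => ((memLp_const _).sub (hα j (Finset.mem_range.1 hj))).integrable_norm_pow
      two_ne_zero
  simp only [intMSE, hpt]
  exact integral_finsetSum _ hint

end Estimator

theorem stmt16_general
    (k : ℕ)
    {d : ℕ} {D : Set (Fin d → ℝ)} (hDcomp : IsCompact D)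
    {a b c : ℝ} (ha : 0 < a) (hb : 0 < b) (hc : c = a + b)
    {f : (Fin d → ℝ) → ℝ} (hfmeas : Measurable f)
    (hfbd : ∀ x ∈ D, f x ∈ Set.Icc (-a) a)
    {pX : (Fin d → ℝ) → ℝ} (hpXmeas : Measurable pX)
    {φ : ℕ → (Fin d → ℝ) → ℂ} (hφmeas : ∀ j, Measurable (φ j))
    (hφL2 : ∀ j, MemLp (φ j) 2 (volume.restrict D))
    (hON : ∀ j < k, ∀ l < k, (∫ x in D, φ j x * (starRingEnd ℂ) (φ l x)) = if j = l then 1 else 0)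
    {Ω : Type*} [MeasurableSpace Ω] (P : Measure Ω) [IsProbabilityMeasure P]
    (X : ℕ → Ω → (Fin d → ℝ)) (Z T : ℕ → Ω → ℝ)
    (hXmeas : ∀ i, Measurable (X i)) (hZmeas : ∀ i, Measurable (Z i))
    (hTmeas : ∀ i, Measurable (T i))
    (μZ : Measure ℝ) [IsProbabilityMeasure μZ]
    (hZmean : (∫ z, z ∂μZ) = 0) (hZsupp : μZ (Set.Icc (-b) b)ᶜ = 0)
    (hlaw : ∀ i, Measure.map (fun ω => (X i ω, Z i ω, T i ω)) P =
      (deployLaw D pX).prod (μZ.prod (threshLaw c)))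
    (hiid : iIndepFun (fun i ω => (X i ω, Z i ω, T i ω)) P)
    {ν : ℝ} (hν : 0 < ν) (hνinf : ∀ x ∈ D, ν ≤ pX x)
    (hspan : ∀ᵐ x ∂(volume.restrict D),
      (f x : ℂ) = ∑ j ∈ Finset.range k, coeff D f φ j * φ j x) :
    (∀ n : ℕ, 0 < n →
      intMSE P D c pX φ f X Z T n k ≤ c ^ 2 * k / (n * ν))
    ∧ ∃ K : ℝ, ∀ n : ℕ, 0 < n →
        intMSE P D c pX φ f X Z T n k ≤ K / n := by
  have hc₀ : 0 < c := by linarith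
  have hnorm : ∀ j < k, ∫ x in D, ‖φ j x‖ ^ 2 = 1 := fun j hj => by
    -- Parseval for the one-element family `{φ j}`
    simpa using integral_norm_sum_sq_of_orthonormal (s := {j}) (by simpa using hφL2 j)
      (by simpa using hON j hj j hj) fun _ => 1
  have hrange : ∀ x ∈ D, ∀ᵐ z ∂μZ, f x + z ∈ Set.Icc (-c) c := fun x hx => by
    filter_upwards [mem_ae_iff.2 hZsupp] with z hz
    constructor <;> linarith [(hfbd x hx).1, (hfbd x hx).2, hz.1, hz.2]
  have hest := fun n (hn : 0 < n) j (hj : j < k) =>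
    memLp_alphaHat_and_integral_norm_coeff_sub_alphaHat_sq_le hc₀ hDcomp.measurableSet hfmeas
      hpXmeas hν hνinf hZmean hrange
      (fun i => ⟨((hXmeas i).prodMk ((hZmeas i).prodMk (hTmeas i))).aemeasurable, hlaw i⟩)
      hiid (hφmeas j) (hφL2 j) hn
  have hmse : ∀ n : ℕ, 0 < n → intMSE P D c pX φ f X Z T n k ≤ c ^ 2 * k / (n * ν) :=
    fun n hn => by
      rw [intMSE_eq_sum_integral_norm_coeff_sub_alphaHat_sq hφL2 hON hspan
        fun j hj => (hest n hn j hj).1]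
      calc _ ≤ ∑ _j ∈ Finset.range k, c ^ 2 * 1 / (n * ν) := Finset.sum_le_sum fun j hj =>
            hnorm j (Finset.mem_range.1 hj) ▸ (hest n hn j (Finset.mem_range.1 hj)).2
        _ = c ^ 2 * k / (n * ν) := by
            rw [Finset.sum_const, Finset.card_range, nsmul_eq_mul]
            ring
  exact ⟨hmse, c ^ 2 * k / ν, fun n hn => (hmse n hn).trans_eq (by field_simp)⟩

/-- **Decay rate of the integrated MSE for a finite-dimensional field class
(Corollary 3):** with truncation `m = k`, `E[‖f − f̂_(n,k)‖²] ≤ c² k/(n ν) = O(1/n)`. -/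
theorem stmt16
    (k : ℕ) (hk : 1 ≤ k)
    {d : ℕ} {D : Set (Fin d → ℝ)} (hDcomp : IsCompact D)
    (hDpos : 0 < volume D) (hDfin : volume D < ⊤)
    {a b c : ℝ} (ha : 0 < a) (hb : 0 < b) (hc : c = a + b)
    {f : (Fin d → ℝ) → ℝ} (hfmeas : Measurable f)
    (hfbd : ∀ x ∈ D, f x ∈ Set.Icc (-a) a)
    {pX : (Fin d → ℝ) → ℝ} (hpXmeas : Measurable pX)
    (hpXpos : ∀ x ∈ D, 0 < pX x) (hpXone : (∫ x in D, pX x) = 1)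
    {φ : ℕ → (Fin d → ℝ) → ℂ} (hφmeas : ∀ j, Measurable (φ j))
    (hφL2 : ∀ j, MemLp (φ j) 2 (volume.restrict D))
    (hON : ∀ j < k, ∀ l < k, (∫ x in D, φ j x * (starRingEnd ℂ) (φ l x)) = if j = l then 1 else 0)
    {Ω : Type*} [MeasurableSpace Ω] (P : Measure Ω) [IsProbabilityMeasure P]
    (X : ℕ → Ω → (Fin d → ℝ)) (Z T : ℕ → Ω → ℝ)
    (hXmeas : ∀ i, Measurable (X i)) (hZmeas : ∀ i, Measurable (Z i))
    (hTmeas : ∀ i, Measurable (T i))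
    (μZ : Measure ℝ) [IsProbabilityMeasure μZ]
    (hZmean : (∫ z, z ∂μZ) = 0) (hZsupp : μZ (Set.Icc (-b) b)ᶜ = 0)
    (hlaw : ∀ i, Measure.map (fun ω => (X i ω, Z i ω, T i ω)) P =
      (deployLaw D pX).prod (μZ.prod (threshLaw c)))
    (hiid : iIndepFun (fun i ω => (X i ω, Z i ω, T i ω)) P)
    {ν : ℝ} (hν : 0 < ν) (hνinf : ∀ x ∈ D, ν ≤ pX x)
    (hspan : ∀ᵐ x ∂(volume.restrict D),
      (f x : ℂ) = ∑ j ∈ Finset.range k, coeff D f φ j * φ j x) :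
    (∀ n : ℕ, 0 < n →
      intMSE P D c pX φ f X Z T n k ≤ c ^ 2 * k / (n * ν))
    ∧ ∃ K : ℝ, ∀ n : ℕ, 0 < n →
        intMSE P D c pX φ f X Z T n k ≤ K / n :=
  stmt16_general k hDcomp ha hb hc hfmeas hfbd hpXmeas hφmeas hφL2 hON P X Z T hXmeas hZmeas hTmeas
    μZ hZmean hZsupp hlaw hiid hν hνinf hspan
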